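/- arXiv:2304.09645 — 3 statements merged into one kernel-verified Lean document; each statement's English description precedes it below -/
import Mathlib

section
/- Let k be a field and let Λ ⊂ k((t^{-1}))^n be a full-rank k[t]-lattice with successive minima σ₁ ≤ … ≤ σ_n and basis matrix M. Then the determinant of Λ, defined as |det M|, equals 2^{σ₁ + … + σ_n}, and this quantity is independent of the choice of basis of Λ. -/
/- Geometry of numbers over `K∞ = k((t⁻¹))`, modelled as formal Laurent series in the
variable `X = t⁻¹`.  Under this identification `ord(f) = -(f.order)`, the absolute value is
`|f| = 2^(ord f)`, and `k[t]` embeds via `t ↦ X⁻¹`, with `ord` of a polynomial equal to its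
degree. -/

open scoped Classical

noncomputable section

variable {k : Type*} [Field k]

/-- The element `t` of `K∞ = k((t⁻¹))`. -/
def tvar (k : Type*) [Field k] : LaurentSeries k := HahnSeries.single (-1 : ℤ) 1

/-- The embedding `k[t] → K∞`. -/
def polyEmb (k : Type*) [Field k] : Polynomial k →+* LaurentSeries k :=
  (Polynomial.aeval (tvar k)).toRingHom

variable {n : ℕ}

/-- The (full) `k[t]`-lattice spanned by the vectors `x 0, …, x (n-1)` in `K∞ⁿ`. -/
def lattice (x : Fin n → Fin n → LaurentSeries k) : Set (Fin n → LaurentSeries k) :=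
  {v | ∃ u : Fin n → Polynomial k, v = ∑ i, polyEmb k (u i) • x i}

/-- `k(t)`-linear independence of vectors in `K∞ⁿ`, phrased (equivalently, by clearing
denominators) via polynomial relations. -/
def PolyIndep (x : Fin n → Fin n → LaurentSeries k) : Prop :=
  ∀ u : Fin n → Polynomial k, ∑ i, polyEmb k (u i) • x i = 0 → ∀ i, u i = 0

/-- `|w| < 2^R` for a vector `w ∈ K∞ⁿ`, where `|w| = max_j 2^(ord (w j))`. -/
def NormLt (w : Fin n → LaurentSeries k) (R : ℤ) : Prop :=
  ∀ j, w j = 0 ∨ -R < (w j).order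

/-- Membership of `w` in the `k(t)`-span of the vectors `x j`, `j ∈ s` (phrased by clearing
denominators). -/
def InRatSpan (x : Fin n → Fin n → LaurentSeries k) (s : Set (Fin n))
    (w : Fin n → LaurentSeries k) : Prop :=
  ∃ q : Polynomial k, q ≠ 0 ∧ ∃ u : Fin n → Polynomial k,
    polyEmb k q • w = ∑ i, if i ∈ s then polyEmb k (u i) • x i else 0

/-- `σ 0 ≤ … ≤ σ (n-1)` are the successive minima of the lattice spanned by `x`:
there are lattice vectors `v i` with `|v i| = 2^(σ i)`, each `v i` outside the `k(t)`-span of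
the previous ones, such that every lattice vector outside the span of `v 0, …, v (i-1)` has
absolute value at least `2^(σ i)`. -/
def AreSuccessiveMinima (x : Fin n → Fin n → LaurentSeries k) (σ : Fin n → ℤ) : Prop :=
  Monotone σ ∧
  ∃ v : Fin n → Fin n → LaurentSeries k,
    (∀ i, v i ∈ lattice x) ∧
    (∀ i, ¬ InRatSpan v {j | j < i} (v i)) ∧
    (∀ i, NormLt (v i) (σ i + 1) ∧ ¬ NormLt (v i) (σ i)) ∧
    (∀ i, ∀ w ∈ lattice x, ¬ InRatSpan v {j | j < i} w → ¬ NormLt w (σ i))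

/-! Let `v 0, …, v (n-1)` be successive minimal vectors, `|v i| = 2^(σ i)`. Their leading
coefficients (the coefficients of `t^(σ i)`) form a nonsingular matrix over `k`: a `k`-relation
among its rows with last nonzero coefficient `c m` would make `∑ c i t^(σ m - σ i) v i` a
lattice vector of norm `< 2^(σ m)`, hence in the `k(t)`-span of `v 0, …, v (m-1)`, against the
independence of the `v i`. Scaling row `i` by `t^(-σ i)` therefore gives a matrix over `k⟦t⁻¹⟧`
whose determinant is a unit, so `|det v| = 2^(∑ σ i)`. The same norm argument, applied to the
fractional parts of the `K∞`-coordinates of a lattice vector, shows that the `v i` form a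
`k[t]`-basis. Any other basis `y` then differs from `v` by polynomial matrices in both
directions; their determinants are nonzero polynomials, of absolute value `≥ 1`, so
`|det y| = |det v|`. -/

open HahnSeries
open scoped Polynomial

section PolyEmb

lemma polyEmb_monomial (e : ℕ) (a : k) :
    polyEmb k (Polynomial.monomial e a) = single (-(e : ℤ)) a := by
  rw [polyEmb, AlgHom.toRingHom_eq_coe, RingHom.coe_coe, Polynomial.aeval_monomial, tvar,
    single_pow, algebraMap_apply', ← PowerSeries.C_eq_algebraMap, ofPowerSeries_C, C_apply,
    single_mul_single]
  simp

lemma polyEmb_coeff_neg (p : k[X]) (i : ℕ) : (polyEmb k p).coeff (-(i : ℤ)) = p.coeff i := by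
  induction p using Polynomial.induction_on' with
  | add p q hp hq => rw [map_add, coeff_add, hp, hq, Polynomial.coeff_add]
  | monomial e a => simp [polyEmb_monomial, coeff_single, Polynomial.coeff_monomial, eq_comm]

lemma order_polyEmb_nonpos {p : k[X]} (hp : p ≠ 0) : (polyEmb k p).order ≤ 0 := by
  have : (polyEmb k p).coeff (-(p.natDegree : ℤ)) ≠ 0 := by
    rwa [polyEmb_coeff_neg, Polynomial.coeff_natDegree, Polynomial.leadingCoeff_ne_zero]
  exact (order_le_of_coeff_ne_zero this).trans (by omega)

lemma polyEmb_ne_zero {p : k[X]} (hp : p ≠ 0) : polyEmb k p ≠ 0 := by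
  intro h
  apply Polynomial.leadingCoeff_ne_zero.mpr hp
  rw [Polynomial.leadingCoeff, ← polyEmb_coeff_neg, h, coeff_zero]

lemma exists_one_le_orderTop_sub_polyEmb (c : LaurentSeries k) :
    ∃ p : k[X], 1 ≤ (c - polyEmb k p).orderTop := by
  refine ⟨∑ i ∈ Finset.range ((-c.order).toNat + 1), Polynomial.monomial i (c.coeff (-i)),
    le_orderTop_iff_forall.mpr fun m hm => ?_⟩
  obtain ⟨i, rfl⟩ : ∃ i : ℕ, m = -i := ⟨(-m).toNat, by norm_cast at hm; omega⟩
  rw [coeff_sub, polyEmb_coeff_neg, Polynomial.finsetSum_coeff]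
  simp only [Polynomial.coeff_monomial, Finset.sum_ite_eq', Finset.mem_range]
  split_ifs with hi
  · exact sub_self _
  · rw [sub_zero, coeff_eq_zero_of_lt_order]
    omega

lemma order_eq_of_eq_polyEmb_mul {f g : LaurentSeries k} {a b : k[X]} (hf : f ≠ 0)
    (hfg : f = polyEmb k a * g) (hgf : g = polyEmb k b * f) : g ≠ 0 ∧ g.order = f.order := by
  have hg : g ≠ 0 := by rintro rfl; exact hf (by rw [hfg, mul_zero])
  have ha : a ≠ 0 := by rintro rfl; exact hf (by rw [hfg, map_zero, zero_mul])
  have hb : b ≠ 0 := by rintro rfl; exact hg (by rw [hgf, map_zero, zero_mul])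
  have hfo := congrArg order hfg
  have hgo := congrArg order hgf
  rw [order_mul (polyEmb_ne_zero ha) hg] at hfo
  rw [order_mul (polyEmb_ne_zero hb) hf] at hgo
  have := order_polyEmb_nonpos ha
  have := order_polyEmb_nonpos hb
  exact ⟨hg, by omega⟩

end PolyEmb

section Lattice

lemma mem_lattice_self (x : Fin n → Fin n → LaurentSeries k) (i : Fin n) : x i ∈ lattice x :=
  ⟨Pi.single i 1, by simp [Pi.single_apply]⟩

variable {x z : Fin n → Fin n → LaurentSeries k}

lemma sum_polyEmb_smul_mem_lattice (hz : ∀ i, z i ∈ lattice x) (u : Fin n → k[X]) :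
    ∑ i, polyEmb k (u i) • z i ∈ lattice x := by
  choose B hB using hz
  refine ⟨fun j => ∑ i, u i * B i j, ?_⟩
  simp only [hB, Finset.smul_sum, map_sum, map_mul, Finset.sum_smul, mul_smul]
  exact Finset.sum_comm

lemma sub_mem_lattice {a b : Fin n → LaurentSeries k} (ha : a ∈ lattice x) (hb : b ∈ lattice x) :
    a - b ∈ lattice x := by
  obtain ⟨u, rfl⟩ := ha
  obtain ⟨w, rfl⟩ := hb
  exact ⟨u - w, by simp [sub_smul]⟩

lemma exists_det_eq_polyEmb_mul (hz : ∀ i, z i ∈ lattice x) :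
    ∃ a : k[X], (Matrix.of z).det = polyEmb k a * (Matrix.of x).det := by
  choose A hA using hz
  refine ⟨(Matrix.of A).det, ?_⟩
  rw [RingHom.map_det, ← Matrix.det_mul]
  congr 1
  ext i j
  simp [hA i, Matrix.mul_apply, RingHom.mapMatrix_apply]

end Lattice

section LeadingCoeff

variable {R : Type*}

lemma zero_le_orderTop_iff_exists_ofPowerSeries [Semiring R] {f : LaurentSeries R} :
    0 ≤ f.orderTop ↔ ∃ F : PowerSeries R, ofPowerSeries ℤ R F = f := by
  simp only [le_orderTop_iff_forall, WithTop.coe_lt_zero]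
  constructor
  · intro h
    refine ⟨PowerSeries.mk fun i => f.coeff i, ?_⟩
    ext i
    rw [PowerSeries.coeff_coe]
    split_ifs with hi
    · exact (h i hi).symm
    · rw [PowerSeries.coeff_mk, Int.natAbs_of_nonneg (not_lt.mp hi)]
  · rintro ⟨F, rfl⟩ i hi
    rw [PowerSeries.coeff_coe, if_pos hi]

lemma prod_single_one {ι : Type*} [CommSemiring R] (s : Finset ι) (e : ι → ℤ) :
    ∏ i ∈ s, (single (e i) 1 : LaurentSeries R) = single (∑ i ∈ s, e i) 1 := by
  induction s using Finset.cons_induction with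
  | empty => simp
  | cons a s ha ih => rw [Finset.prod_cons, Finset.sum_cons, ih, single_mul_single, one_mul]

variable {ι : Type*} [Fintype ι] [DecidableEq ι]

lemma det_coeff_zero_of_zero_le_orderTop [CommRing R] {M : Matrix ι ι (LaurentSeries R)}
    (hM : ∀ i j, 0 ≤ (M i j).orderTop) :
    0 ≤ M.det.orderTop ∧ M.det.coeff 0 = (M.map fun f => f.coeff 0).det := by
  choose P hP using fun i j => zero_le_orderTop_iff_exists_ofPowerSeries.mp (hM i j)
  have hMP : M = (ofPowerSeries ℤ R).mapMatrix (Matrix.of P) := by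
    ext1 i j; exact (hP i j).symm
  have hcoeff : (fun f : LaurentSeries R => f.coeff 0) ∘ ofPowerSeries ℤ R =
      PowerSeries.constantCoeff := by
    ext F; simpa using LaurentSeries.coeff_coe_powerSeries F 0
  refine ⟨?_, ?_⟩
  · rw [hMP, ← RingHom.map_det]
    exact zero_le_orderTop_iff_exists_ofPowerSeries.mpr ⟨_, rfl⟩
  · rw [hMP, ← RingHom.map_det, RingHom.mapMatrix_apply, Matrix.map_map, hcoeff,
      ← RingHom.mapMatrix_apply, ← RingHom.map_det]
    exact congrFun hcoeff _

lemma det_ne_zero_and_order_det_of_leadingCoeff [CommRing R] [IsDomain R]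
    {M : Matrix ι ι (LaurentSeries R)} {e : ι → ℤ}
    (hM : ∀ i j, (e i : WithTop ℤ) ≤ (M i j).orderTop)
    (hlead : (Matrix.of fun i j => (M i j).coeff (e i)).det ≠ 0) :
    M.det ≠ 0 ∧ M.det.order = ∑ i, e i := by
  set W := Matrix.of fun i j => single (-e i) (1 : R) * M i j
  have hW : ∀ i j, 0 ≤ (W i j).orderTop ∧ (W i j).coeff 0 = (M i j).coeff (e i) := by
    refine fun i j => ⟨?_, ?_⟩
    · calc (0 : WithTop ℤ) = ((-e i : ℤ) : WithTop ℤ) + (e i : WithTop ℤ) := by norm_cast; simp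
        _ ≤ (single (-e i) (1 : R)).orderTop + (M i j).orderTop :=
          add_le_add orderTop_single_le (hM i j)
        _ ≤ (W i j).orderTop := orderTop_add_le_mul
    · show (single (-e i) (1 : R) * M i j).coeff 0 = _
      simpa using coeff_single_mul_add (r := (1 : R)) (x := M i j) (a := e i) (b := -e i)
  obtain ⟨hWtop, hWcoeff⟩ := det_coeff_zero_of_zero_le_orderTop fun i j => (hW i j).1
  have hWcoeff' : W.det.coeff 0 ≠ 0 := by
    rw [hWcoeff]
    convert hlead using 2
    ext i j
    exact (hW i j).2
  have hWne : W.det ≠ 0 := fun h => hWcoeff' (by rw [h, coeff_zero])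
  have hWorder : W.det.order = 0 :=
    le_antisymm (order_le_of_coeff_ne_zero hWcoeff') (zero_le_orderTop_iff.mp hWtop)
  have hWdet : W.det = single (-∑ i, e i) 1 * M.det := by
    rw [Matrix.det_mul_column, prod_single_one, Finset.sum_neg_distrib]
  have hMne : M.det ≠ 0 := fun h => hWne (by rw [hWdet, h, mul_zero])
  rw [hWdet, order_mul (single_ne_zero one_ne_zero) hMne, order_single one_ne_zero] at hWorder
  exact ⟨hMne, by omega⟩

end LeadingCoeff

section SuccessiveMinima

lemma exists_ne_zero_forall_gt_eq_zero {ι M : Type*} [Fintype ι] [LinearOrder ι] [Zero M]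
    {f : ι → M} (hf : f ≠ 0) : ∃ m, f m ≠ 0 ∧ ∀ i, m < i → f i = 0 := by
  obtain ⟨i, hi⟩ := Function.ne_iff.mp hf
  obtain ⟨m, hm, hmax⟩ := (Finset.univ.filter fun i => f i ≠ 0).exists_max_image id ⟨i, by simpa⟩
  refine ⟨m, (Finset.mem_filter.mp hm).2, fun j hj => ?_⟩
  by_contra h
  exact (hmax j (by simpa)).not_gt hj

lemma sum_eq_add_sum_ite_lt {ι M : Type*} [Fintype ι] [LinearOrder ι] [AddCommMonoid M]
    {f : ι → M} {m : ι} (hf : ∀ i, m < i → f i = 0) :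
    ∑ i, f i = f m + ∑ i, if i < m then f i else 0 := by
  have h : ∀ i, f i = (if i = m then f i else 0) + if i < m then f i else 0 := by
    intro i
    rcases lt_trichotomy i m with h | rfl | h
    · simp [h, h.ne]
    · simp
    · simp [h.ne', h.not_gt, hf i h]
  rw [Finset.sum_congr rfl fun i _ => h i, Finset.sum_add_distrib, Finset.sum_ite_eq']
  simp

lemma normLt_iff_coeff {w : Fin n → LaurentSeries k} {R : ℤ} :
    NormLt w R ↔ ∀ j, ∀ m : ℤ, m ≤ -R → (w j).coeff m = 0 := by
  refine forall_congr' fun j => ?_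
  rcases eq_or_ne (w j) 0 with h | h
  · simp [h]
  · refine ⟨fun h' m hm => coeff_eq_zero_of_lt_order (by have := h'.resolve_left h; omega),
      fun h' => Or.inr ?_⟩
    by_contra! hle
    exact h (coeff_order_eq_zero.mp (h' _ hle))

lemma normLt_iff_le_orderTop {w : Fin n → LaurentSeries k} {R : ℤ} :
    NormLt w R ↔ ∀ j, ((1 - R : ℤ) : WithTop ℤ) ≤ (w j).orderTop := by
  simp only [normLt_iff_coeff, le_orderTop_iff_forall, WithTop.coe_lt_coe]
  exact forall_congr' fun j => forall_congr' fun m => imp_congr_left ⟨by omega, by omega⟩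

lemma NormLt.of_succ {w : Fin n → LaurentSeries k} {R : ℤ} (h : NormLt w (R + 1))
    (h0 : ∀ j, (w j).coeff (-R) = 0) : NormLt w R := by
  rw [normLt_iff_coeff] at h ⊢
  intro j m hm
  rcases hm.lt_or_eq with hm | rfl
  · exact h j m (by omega)
  · exact h0 j

lemma normLt_sum_smul {a : Fin n → LaurentSeries k} {v : Fin n → Fin n → LaurentSeries k}
    {σ : Fin n → ℤ} {S : ℤ} (hv : ∀ i, NormLt (v i) (σ i + 1))
    (ha : ∀ i, ((σ i - S : ℤ) : WithTop ℤ) ≤ (a i).orderTop) :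
    NormLt (∑ i, a i • v i) (S + 1) := by
  simp only [normLt_iff_le_orderTop, Finset.sum_apply, Pi.smul_apply, smul_eq_mul,
    ← addVal_apply] at hv ⊢
  refine fun j => (addVal ℤ k).map_le_sum fun i _ => ?_
  calc ((1 - (S + 1) : ℤ) : WithTop ℤ) = ((σ i - S : ℤ) : WithTop ℤ) + ((1 - (σ i + 1) : ℤ)) := by
        norm_cast; ring_nf
    _ ≤ addVal ℤ k (a i) + addVal ℤ k (v i j) :=
        add_le_add (by rw [addVal_apply]; exact ha i) (hv i j)
    _ = addVal ℤ k (a i * v i j) := ((addVal ℤ k).map_mul _ _).symm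

lemma polyIndep_of_forall_not_inRatSpan {v : Fin n → Fin n → LaurentSeries k}
    (hv : ∀ i, ¬ InRatSpan v {j | j < i} (v i)) : PolyIndep v := by
  intro u hu
  suffices u = 0 from fun i => congrFun this i
  by_contra hu0
  obtain ⟨m, hm, hgt⟩ := exists_ne_zero_forall_gt_eq_zero hu0
  refine hv m ⟨-u m, neg_ne_zero.mpr hm, u, ?_⟩
  rw [sum_eq_add_sum_ite_lt (m := m) fun i hi => by simp [hgt i hi]] at hu
  convert neg_eq_of_add_eq_zero_right hu using 1
  · simp [neg_smul]
  · exact Finset.sum_congr rfl fun _ _ => by congr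

lemma InRatSpan.exists_relation {v : Fin n → Fin n → LaurentSeries k} {m : Fin n}
    {a : Fin n → LaurentSeries k} (h : InRatSpan v {j | j < m} (∑ i, a i • v i)) :
    ∃ q : k[X], q ≠ 0 ∧ ∃ g : Fin n → k[X], g m = 0 ∧
      ∑ i, (polyEmb k q * a i - polyEmb k (g i)) • v i = 0 := by
  obtain ⟨q, hq, u, hu⟩ := h
  refine ⟨q, hq, fun i => if i ∈ {j | j < m} then u i else 0, by simp, ?_⟩
  have hg : ∑ i, polyEmb k (if i ∈ {j | j < m} then u i else 0) • v i =
      ∑ i, if i ∈ {j | j < m} then polyEmb k (u i) • v i else 0 :=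
    Finset.sum_congr rfl fun i _ => by rw [apply_ite (polyEmb k), ite_smul, map_zero, zero_smul]
  simp only [sub_smul, Finset.sum_sub_distrib, mul_smul, ← Finset.smul_sum, hu, hg]
  exact sub_eq_zero.mpr (Finset.sum_congr rfl fun _ _ => by congr)

end SuccessiveMinima

structure AreSuccessiveMinimalVectors (x v : Fin n → Fin n → LaurentSeries k) (σ : Fin n → ℤ) :
    Prop where
  monotone : Monotone σ
  mem_lattice : ∀ i, v i ∈ lattice x
  not_inRatSpan : ∀ i, ¬ InRatSpan v {j | j < i} (v i)
  normLt : ∀ i, NormLt (v i) (σ i + 1)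
  minimal : ∀ i, ∀ w ∈ lattice x, ¬ InRatSpan v {j | j < i} w → ¬ NormLt w (σ i)

lemma AreSuccessiveMinima.exists_minimalVectors {x : Fin n → Fin n → LaurentSeries k}
    {σ : Fin n → ℤ} (h : AreSuccessiveMinima x σ) : ∃ v, AreSuccessiveMinimalVectors x v σ :=
  let ⟨hmono, v, hmem, hind, hnorm, hmin⟩ := h
  ⟨v, hmono, hmem, hind, fun i => (hnorm i).1, hmin⟩

namespace AreSuccessiveMinimalVectors

variable {x v : Fin n → Fin n → LaurentSeries k} {σ : Fin n → ℤ}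

lemma inRatSpan_of_normLt (hv : AreSuccessiveMinimalVectors x v σ) {m : Fin n}
    {w : Fin n → LaurentSeries k} (hw : w ∈ lattice x) (hnorm : NormLt w (σ m)) :
    InRatSpan v {j | j < m} w :=
  not_not.mp fun h => hv.minimal m w hw h hnorm

lemma det_leadingCoeff_ne_zero (hv : AreSuccessiveMinimalVectors x v σ) :
    (Matrix.of fun i j => (v i j).coeff (-σ i)).det ≠ 0 := by
  intro h0
  obtain ⟨c, hc, hcv⟩ := Matrix.exists_vecMul_eq_zero_iff.mpr h0
  obtain ⟨m, hcm, hgt⟩ := exists_ne_zero_forall_gt_eq_zero hc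
  set u : Fin n → k[X] := fun i => Polynomial.monomial (σ m - σ i).toNat (c i)
  have hu : ∀ i, polyEmb k (u i) = single (σ i - σ m) (c i) := by
    intro i
    rcases le_or_gt i m with hi | hi
    · rw [polyEmb_monomial, Int.toNat_of_nonneg (sub_nonneg.mpr (hv.monotone hi)), neg_sub]
    · simp [u, hgt i hi]
  have hnorm : NormLt (∑ i, polyEmb k (u i) • v i) (σ m) := by
    refine (normLt_sum_smul (S := σ m) hv.normLt fun i => ?_).of_succ fun j => ?_
    · rw [hu]; exact orderTop_single_le
    · simp only [Finset.sum_apply, Pi.smul_apply, smul_eq_mul, coeff_sum, hu]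
      have hcoeff : ∀ i, (single (σ i - σ m) (c i) * v i j).coeff (-σ m) =
          c i * (v i j).coeff (-σ i) := fun i => by
        rw [show -σ m = -σ i + (σ i - σ m) by ring, coeff_single_mul_add]
      simp only [hcoeff]
      exact congrFun hcv j
  obtain ⟨q, hq, g, hgm, hrel⟩ :=
    (hv.inRatSpan_of_normLt (sum_polyEmb_smul_mem_lattice hv.mem_lattice u) hnorm).exists_relation
  have hqu := polyIndep_of_forall_not_inRatSpan hv.not_inRatSpan (fun i => q * u i - g i)
    (by simpa [map_sub, map_mul] using hrel) m
  rw [hgm, sub_zero] at hqu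
  exact mul_ne_zero hq (by simpa [u] using hcm) hqu

lemma det_ne_zero_and_order_det (hv : AreSuccessiveMinimalVectors x v σ) :
    (Matrix.of v).det ≠ 0 ∧ (Matrix.of v).det.order = -∑ i, σ i := by
  have hbound : ∀ i j, ((-σ i : ℤ) : WithTop ℤ) ≤ (v i j).orderTop := fun i j => by
    simpa using normLt_iff_le_orderTop.mp (hv.normLt i) j
  have := det_ne_zero_and_order_det_of_leadingCoeff hbound hv.det_leadingCoeff_ne_zero
  rwa [Finset.sum_neg_distrib] at this

lemma lattice_subset (hv : AreSuccessiveMinimalVectors x v σ) : lattice x ⊆ lattice v := by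
  intro w hw
  have hdet := hv.det_ne_zero_and_order_det.1
  obtain ⟨c, rfl⟩ : ∃ c : Fin n → LaurentSeries k, w = ∑ i, c i • v i := by
    refine ⟨Matrix.vecMul w (Matrix.of v)⁻¹, ?_⟩
    calc w = Matrix.vecMul (Matrix.vecMul w (Matrix.of v)⁻¹) (Matrix.of v) := by
          rw [Matrix.vecMul_vecMul, Matrix.nonsing_inv_mul _ (isUnit_iff_ne_zero.mpr hdet),
            Matrix.vecMul_one]
      _ = _ := Matrix.vecMul_eq_sum _ _
  choose p hp using fun i => exists_one_le_orderTop_sub_polyEmb (c i)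
  suffices he : (fun i => c i - polyEmb k (p i)) = 0 by
    refine ⟨p, Finset.sum_congr rfl fun i _ => ?_⟩
    rw [sub_eq_zero.mp (congrFun he i)]
  by_contra he
  obtain ⟨m, hem, hgt⟩ := exists_ne_zero_forall_gt_eq_zero he
  set e := fun i => c i - polyEmb k (p i)
  have hmem : ∑ i, e i • v i ∈ lattice x := by
    convert sub_mem_lattice hw (sum_polyEmb_smul_mem_lattice hv.mem_lattice p) using 1
    simp [e, sub_smul]
  have hnorm : NormLt (∑ i, e i • v i) (σ m) := by
    convert normLt_sum_smul (S := σ m - 1) hv.normLt fun i => ?_ using 1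
    · ring
    rcases le_or_gt i m with hi | hi
    · calc ((σ i - (σ m - 1) : ℤ) : WithTop ℤ) ≤ 1 := by
            have := hv.monotone hi; norm_cast; omega
        _ ≤ (e i).orderTop := hp i
    · simp [e, hgt i hi]
  obtain ⟨q, hq, g, hgm, hrel⟩ := (hv.inRatSpan_of_normLt hmem hnorm).exists_relation
  have hcoord := congrFun (Matrix.eq_zero_of_vecMul_eq_zero hdet
    (by rwa [Matrix.vecMul_eq_sum])) m
  simp only [hgm, map_zero, sub_zero, Pi.zero_apply] at hcoord
  exact hem ((mul_eq_zero.mp hcoord).resolve_left (polyEmb_ne_zero hq))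

end AreSuccessiveMinimalVectors

theorem lattice_det_general (x : Fin n → Fin n → LaurentSeries k) (σ : Fin n → ℤ)
    (hσ : AreSuccessiveMinima x σ) :
    ∀ y : Fin n → Fin n → LaurentSeries k, PolyIndep y → lattice y = lattice x →
      (Matrix.of y).det ≠ 0 ∧ ((Matrix.of y).det).order = -(∑ i, σ i) := by
  intro y _ hyx
  obtain ⟨v, hv⟩ := hσ.exists_minimalVectors
  obtain ⟨hv0, hvorder⟩ := hv.det_ne_zero_and_order_det
  obtain ⟨a, ha⟩ := exists_det_eq_polyEmb_mul fun i => hyx ▸ hv.mem_lattice i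
  obtain ⟨b, hb⟩ :=
    exists_det_eq_polyEmb_mul fun i => hv.lattice_subset (hyx ▸ mem_lattice_self y i)
  obtain ⟨hy0, hyorder⟩ := order_eq_of_eq_polyEmb_mul hv0 ha hb
  exact ⟨hy0, hyorder.trans hvorder⟩

/-- **Determinant of a lattice (Mahler; equation (A.2)).**  For any basis `y` of the lattice
spanned by `x` (with successive minima `σ`), the determinant of the basis matrix is nonzero
and `|det M| = 2^(σ 0 + ⋯ + σ (n-1))`, i.e. `(det M).order = -(∑ i, σ i)`; in particular this
quantity does not depend on the choice of basis. -/
theorem lattice_det (x : Fin n → Fin n → LaurentSeries k) (σ : Fin n → ℤ)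
    (hx : PolyIndep x) (hσ : AreSuccessiveMinima x σ) :
    ∀ y : Fin n → Fin n → LaurentSeries k, PolyIndep y → lattice y = lattice x →
      (Matrix.of y).det ≠ 0 ∧ ((Matrix.of y).det).order = -(∑ i, σ i) :=
  lattice_det_general x σ hσ

end
end

section
/- Let k be a field, and let V be a finite-dimensional k-vector space with a linear form f: V → k. In the Grothendieck ring of varieties with exponentials over k, the class [V, f] equals 𝕃^{dim V} if f = 0, and equals 0 otherwise. -/
open scoped Classical

noncomputable section

/- The Grothendieck ring of varieties with exponentials `K₀(ExpVar_k)` is encoded through its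
universal property: a "motivic measure with exponentials" assigns elements of a commutative
ring `R` to pairs `(S, p)` of a constructible subset `S` of affine space over `k` together
with a regular function `p` on it, subject to the generating relations of `K₀(ExpVar_k)`:
isomorphism invariance, scissor relations, multiplicativity, normalization on a point, and
the relation `[X × 𝔸¹, pr₂] = 0`. -/

variable (k : Type*) [Field k]

/-- Points of affine `m`-space over `k`. -/
abbrev PtK (m : ℕ) := Fin m → k

/-- Zariski-closed subsets. -/
def IsZClosed {m : ℕ} (Z : Set (PtK k m)) : Prop :=
  ∃ I : Set (MvPolynomial (Fin m) k), Z = {x | ∀ p ∈ I, MvPolynomial.eval x p = 0}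

/-- Constructible subsets: finite unions of locally closed subsets. -/
def IsZConstructible {m : ℕ} (S : Set (PtK k m)) : Prop :=
  ∃ (N : ℕ) (C D : Fin N → Set (PtK k m)),
    (∀ i, IsZClosed k (C i)) ∧ (∀ i, IsZClosed k (D i)) ∧ S = ⋃ i, C i \ D i

/-- Polynomial maps between affine spaces. -/
def IsPolyMap {m l : ℕ} (φ : PtK k m → PtK k l) : Prop :=
  ∃ P : Fin l → MvPolynomial (Fin m) k, ∀ x j, φ x j = MvPolynomial.eval x (P j)

/-- A motivic measure on varieties with exponentials, with values in `R`. -/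
structure ExpMotivicMeasure (R : Type*) [CommRing R] where
  meas : ∀ m : ℕ, Set (PtK k m) → MvPolynomial (Fin m) k → R
  meas_empty : ∀ (m : ℕ) (p : MvPolynomial (Fin m) k), meas m ∅ p = 0
  meas_point : meas 0 Set.univ 0 = 1
  meas_add : ∀ (m : ℕ) (S Z : Set (PtK k m)) (p : MvPolynomial (Fin m) k),
    IsZConstructible k S → IsZClosed k Z →
    meas m S p = meas m (S ∩ Z) p + meas m (S \ Z) p
  meas_iso : ∀ (m l : ℕ) (S : Set (PtK k m)) (T : Set (PtK k l))
    (φ : PtK k m → PtK k l) (ψ : PtK k l → PtK k m)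
    (p : MvPolynomial (Fin m) k) (q : MvPolynomial (Fin l) k),
    IsZConstructible k S → IsZConstructible k T → IsPolyMap k φ → IsPolyMap k ψ →
    Set.MapsTo φ S T → Set.MapsTo ψ T S →
    (∀ x ∈ S, ψ (φ x) = x) → (∀ y ∈ T, φ (ψ y) = y) →
    (∀ x ∈ S, MvPolynomial.eval x p = MvPolynomial.eval (φ x) q) →
    meas m S p = meas l T q
  meas_prod : ∀ (m l : ℕ) (S : Set (PtK k m)) (T : Set (PtK k l))
    (p : MvPolynomial (Fin m) k) (q : MvPolynomial (Fin l) k),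
    IsZConstructible k S → IsZConstructible k T →
    meas (m + l) {x | (fun i => x (Fin.castAdd l i)) ∈ S ∧ (fun j => x (Fin.natAdd m j)) ∈ T}
      (MvPolynomial.rename (Fin.castAdd l) p + MvPolynomial.rename (Fin.natAdd m) q)
      = meas m S p * meas l T q
  meas_cyl : ∀ (m : ℕ) (S : Set (PtK k m)), IsZConstructible k S →
    meas (m + 1) {x | (fun i : Fin m => x i.castSucc) ∈ S} (MvPolynomial.X (Fin.last m)) = 0

/-- The Lefschetz class `𝕃 = [𝔸¹, 0]`. -/
def ExpMotivicMeasure.lef {R : Type*} [CommRing R] (μ : ExpMotivicMeasure k R) : R :=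
  μ.meas 1 Set.univ 0

/-! If `l j ≠ 0`, the linear change of variables replacing `x j` by `f x = ∑ lᵢ xᵢ` is invertible,
so `[𝔸^m, f] = [𝔸^m, x j]`; swapping `j` with the last coordinate makes this an instance of the
relation `[X × 𝔸¹, pr₂] = 0`. For `f = 0`, multiplicativity gives `[𝔸^m, 0] = 𝕃^m`. -/

section

variable {k}

open MvPolynomial

lemma isZConstructible_univ (m : ℕ) : IsZConstructible k (Set.univ : Set (PtK k m)) :=
  ⟨1, fun _ => Set.univ, fun _ => ∅, fun _ => ⟨∅, by simp⟩, fun _ => ⟨{1}, by simp⟩,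
    by simp [Set.iUnion_const]⟩

lemma LinearMap.isPolyMap {m l : ℕ} (g : PtK k m →ₗ[k] PtK k l) : IsPolyMap k g := by
  refine ⟨fun j => ∑ i, C (g (Pi.single i 1) j) * X i, fun x j => ?_⟩
  conv_lhs => rw [pi_eq_sum_univ' x, map_sum]
  simp [mul_comm]

def shear {m : ℕ} (l : Fin m → k) (j : Fin m) : PtK k m →ₗ[k] PtK k m :=
  LinearMap.pi fun i => if i = j then ∑ i, l i • LinearMap.proj i else LinearMap.proj i

lemma shear_apply {m : ℕ} (l : Fin m → k) (j : Fin m) (x : PtK k m) (i : Fin m) :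
    shear l j x i = if i = j then ∑ i, l i * x i else x i := by
  unfold shear
  split_ifs <;> simp [*]

lemma shear_injective {m : ℕ} (l : Fin m → k) {j : Fin m} (hj : l j ≠ 0) :
    Function.Injective (shear l j) := by
  rw [← LinearMap.ker_eq_bot, LinearMap.ker_eq_bot']
  intro x hx
  have hoff : ∀ i, i ≠ j → x i = 0 := fun i hi => by
    simpa [shear_apply, hi] using congr_fun hx i
  have hsum : ∑ i, l i * x i = l j * x j := Fintype.sum_eq_single j fun i hi => by simp [hoff i hi]
  have hxj : x j = 0 := by
    simpa [shear_apply, hsum, hj] using congr_fun hx j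
  funext i
  by_cases hi : i = j
  · simp [hi, hxj]
  · exact hoff i hi

namespace ExpMotivicMeasure

variable {R : Type*} [CommRing R] (μ : ExpMotivicMeasure k R)

lemma meas_univ_eq_of_linearEquiv {m l : ℕ} (e : PtK k m ≃ₗ[k] PtK k l)
    (p : MvPolynomial (Fin m) k) (q : MvPolynomial (Fin l) k)
    (h : ∀ x, eval x p = eval (e x) q) : μ.meas m Set.univ p = μ.meas l Set.univ q :=
  μ.meas_iso m l _ _ e e.symm p q (isZConstructible_univ m) (isZConstructible_univ l)
    (LinearMap.isPolyMap e.toLinearMap) (LinearMap.isPolyMap e.symm.toLinearMap)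
    (Set.mapsTo_univ _ _) (Set.mapsTo_univ _ _) (fun x _ => e.symm_apply_apply x)
    (fun y _ => e.apply_symm_apply y) (fun x _ => h x)

lemma meas_univ_zero (m : ℕ) : μ.meas m Set.univ 0 = μ.lef k ^ m := by
  induction m with
  | zero => simpa using μ.meas_point
  | succ n ih =>
    have h := μ.meas_prod n 1 Set.univ Set.univ 0 0
      (isZConstructible_univ n) (isZConstructible_univ 1)
    simp only [Set.mem_univ, and_self, Set.ofPred_true, map_zero, add_zero] at h
    rw [h, ih, lef, pow_succ]

lemma meas_univ_X {m : ℕ} (j : Fin m) : μ.meas m Set.univ (X j) = 0 := by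
  obtain ⟨n, rfl⟩ : ∃ n, m = n + 1 := Nat.exists_eq_add_one.mpr j.pos
  have hcyl := μ.meas_cyl n Set.univ (isZConstructible_univ n)
  simp only [Set.mem_univ, Set.ofPred_true] at hcyl
  rw [← hcyl]
  exact μ.meas_univ_eq_of_linearEquiv (LinearEquiv.funCongrLeft k k (Equiv.swap j (Fin.last n)))
    _ _ fun x => by simp [LinearEquiv.funCongrLeft_apply]

end ExpMotivicMeasure

end

/-- **Class of a vector space with a linear form (Lemma 2.3 / CLL Lemma 1.1.11).**
For a finite-dimensional `k`-vector space `V = k^m` (in coordinates) with a linear form `f`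
given by `x ↦ Σ lᵢ xᵢ`, in `K₀(ExpVar_k)`: `[V, f] = 𝕃^(dim V)` if `f = 0` and `[V, f] = 0`
otherwise. -/
theorem class_of_linear_form (R : Type*) [CommRing R] (μ : ExpMotivicMeasure k R)
    (m : ℕ) (l : Fin m → k) :
    μ.meas m Set.univ (∑ i, MvPolynomial.C (l i) * MvPolynomial.X i)
      = if l = 0 then μ.lef k ^ m else 0 := by
  split_ifs with hl
  · subst hl
    simpa using μ.meas_univ_zero m
  obtain ⟨j, hj⟩ := Function.ne_iff.mp hl
  rw [μ.meas_univ_eq_of_linearEquiv (LinearEquiv.ofInjectiveEndo _ (shear_injective l hj)) _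
    (MvPolynomial.X j) fun x => by simp [shear_apply]]
  exact μ.meas_univ_X j

end
end

section
/- For all integers d ≥ 2, e ≥ 1 and n > 2^d(d-1), setting Δ = ⌊(e+1)/2⌋, one has max over integers m ≥ Δ of (2^d·m - ⌊m/(d-1)⌋·n) ≤ ⌊(e+1)/(2d-2)⌋·(2^d(d-1) - n) + 2^d(d-1). -/
/-- **Elementary maximum bound (Lemma 6.3).**
For integers `d ≥ 2`, `e ≥ 1` and `n > 2^d (d-1)`, and every integer `m ≥ Δ = ⌊(e+1)/2⌋`,
one has `2^d m - ⌊m/(d-1)⌋ n ≤ ⌊(e+1)/(2d-2)⌋ (2^d (d-1) - n) + 2^d (d-1)`;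
i.e. the maximum of the left-hand side over `m ≥ Δ` is bounded by the right-hand side. -/
theorem max_bound (d e n : ℕ) (hd : 2 ≤ d) (he : 1 ≤ e) (hn : 2 ^ d * (d - 1) < n) :
    ∀ m : ℕ, (e + 1) / 2 ≤ m →
      (2 : ℤ) ^ d * m - ((m / (d - 1) : ℕ) : ℤ) * n ≤
        (((e + 1) / (2 * d - 2) : ℕ) : ℤ) * ((2 : ℤ) ^ d * ((d : ℤ) - 1) - n) +
          (2 : ℤ) ^ d * ((d : ℤ) - 1) := by
  intro m hm
  have hd1 : 0 < d - 1 := by omega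
  have hmeq : m = (d - 1) * (m / (d - 1)) + m % (d - 1) := (Nat.div_add_mod m (d - 1)).symm
  have hrlt : m % (d - 1) < d - 1 := Nat.mod_lt _ hd1
  have hQ : (e + 1) / (2 * d - 2) ≤ m / (d - 1) := by
    have h2 : (e + 1) / (2 * d - 2) = (e + 1) / 2 / (d - 1) := by
      rw [Nat.div_div_eq_div_mul]; congr 1; omega
    rw [h2]; exact Nat.div_le_div_right hm
  set q : ℕ := m / (d - 1)
  set r : ℕ := m % (d - 1)
  set Q : ℕ := (e + 1) / (2 * d - 2)
  have hcast : (m : ℤ) = ((d : ℤ) - 1) * q + r := by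
    have hd' : ((d - 1 : ℕ) : ℤ) = (d : ℤ) - 1 := by omega
    rw [← hd']; exact_mod_cast congrArg (Nat.cast : ℕ → ℤ) hmeq
  have hnz : (2 : ℤ) ^ d * ((d : ℤ) - 1) < (n : ℤ) := by
    have hd' : ((d - 1 : ℕ) : ℤ) = (d : ℤ) - 1 := by omega
    rw [← hd']; exact_mod_cast hn
  have hqQ : (Q : ℤ) ≤ (q : ℤ) := by exact_mod_cast hQ
  have hr : (r : ℤ) ≤ (d : ℤ) - 1 - 1 := by omega
  have hkey : (q : ℤ) * ((2 : ℤ) ^ d * ((d : ℤ) - 1) - n) ≤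
      (Q : ℤ) * ((2 : ℤ) ^ d * ((d : ℤ) - 1) - n) :=
    mul_le_mul_of_nonpos_right hqQ (by linarith)
  have hp : (0 : ℤ) < 2 ^ d := by positivity
  rw [hcast]
  nlinarith [mul_le_mul_of_nonneg_left hr (le_of_lt hp)]
end
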